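/- arXiv:2408.09981 — 2 statements merged into one kernel-verified Lean document; each statement's English description precedes it below -/
import Mathlib

section
/- Let d, N, M be positive integers and let T : ℓ₂^N(ℤ^d) → ℓ₂^M(ℤ^d) be a bounded (continuous) linear operator that is shift-invariant, i.e. T{x[·−k₀]} = T{x}[·−k₀] for every x ∈ ℓ₂^N(ℤ^d) and every k₀ ∈ ℤ^d. Then there exists one and only one matrix-valued sequence H : ℤ^d → ℝ^{M×N} whose entries are square-summable (each entry sequence in ℓ₂(ℤ^d)) such that for every x ∈ ℓ₂^N(ℤ^d) and every k ∈ ℤ^d, T{x}[k] = ∑_{m∈ℤ^d} H[m] x[k−m], where the series converges absolutely; moreover the n-th column of H equals T{e_n δ[·]}, where e_n is the n-th canonical basis vector of ℝ^N. -/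
/-!
Decompose `x = ∑ₘ δ[· - m] x[m]` in `ℓ²`. Continuity of `T` lets it pass through this series,
shift invariance turns the response to `δ[· - m] v` into the response to `δ v` shifted by `m`,
and linearity in `v ∈ ℝᴺ` expresses the latter through the responses `T{eₙ δ}`. This yields the
convolution formula with `H = [T{e₁ δ} ⋯ T{e_N δ}]`; its absolute convergence is Cauchy–Schwarz.
Conversely, any such `H` is recovered by applying the formula to `x = eₙ δ`.
-/

open scoped ENNReal

variable {α β ι κ : Type*}

theorem Memℓp.comp_equiv {E : Type*} [NormedAddCommGroup E] {p : ℝ≥0∞} {f : α → E}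
    (hf : Memℓp f p) (e : β ≃ α) : Memℓp (f ∘ e) p := by
  obtain (rfl | rfl | hp) := p.trichotomy
  · exact memℓp_zero_iff.2 (hf.finite_dsupport.preimage e.injective.injOn)
  · rw [memℓp_infty_iff, ← e.surjective.range_comp (fun a => ‖f a‖)] at hf
    exact memℓp_infty_iff.2 hf
  · exact memℓp_gen ((e.summable_iff (f := fun a => ‖f a‖ ^ p.toReal)).2 (hf.summable hp))

theorem Memℓp.piLp_apply [Fintype ι] {γ : ι → Type*} [∀ i, NormedAddCommGroup (γ i)]
    {p r : ℝ≥0∞} [Fact (1 ≤ r)] {f : α → PiLp r γ} (hf : Memℓp f p) (i : ι) :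
    Memℓp (fun a => f a i) p :=
  hf.mono' fun a => PiLp.norm_apply_le (f a) i

theorem summable_abs_mul_of_memℓp_two {f g : α → ℝ} (hf : Memℓp f 2) (hg : Memℓp g 2) :
    Summable fun a => |f a * g a| := by
  have := lp.summable_mul (E := fun _ : α => ℝ) (p := 2) (q := 2)
    (by simpa using Real.HolderConjugate.two_two) ⟨f, hf⟩ ⟨g, hg⟩
  simpa [abs_mul] using this

theorem summable_abs_convolution [AddGroup α] [Fintype ι] {H : α → Matrix κ ι ℝ}
    (hH : ∀ i n, Memℓp (fun k => H k i n) 2) (x : lp (fun _ : α => EuclideanSpace ℝ ι) 2)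
    (k : α) (i : κ) : Summable fun m => |∑ n, H m i n * x (k - m) n| := by
  have hx : ∀ n, Memℓp (fun m => x (k - m) n) 2 := fun n =>
    ((lp.memℓp x).piLp_apply n).comp_equiv (Equiv.subLeft k)
  refine .of_nonneg_of_le (fun _ => abs_nonneg _) (fun m => Finset.abs_sum_le_sum_abs _ _) ?_
  exact summable_sum fun n _ => summable_abs_mul_of_memℓp_two (hH i n) (hx n)

def IsShiftInvariant [AddGroup α] {E F : Type*} [NormedAddCommGroup E] [NormedAddCommGroup F]
    {p q : ℝ≥0∞} (T : lp (fun _ : α => E) p → lp (fun _ : α => F) q) : Prop :=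
  ∀ (x y : lp (fun _ : α => E) p) (k₀ : α), (∀ k, y k = x (k - k₀)) → ∀ k, T y k = T x (k - k₀)

theorem IsShiftInvariant.apply_single [AddGroup α] [DecidableEq α] {E F : Type*}
    [NormedAddCommGroup E] [NormedAddCommGroup F] {p q : ℝ≥0∞}
    {T : lp (fun _ : α => E) p → lp (fun _ : α => F) q}
    (hT : IsShiftInvariant T) (m : α) (v : E) (k : α) :
    T (lp.single p m v) k = T (lp.single p 0 v) (k - m) :=
  hT _ _ m (fun j => by simp only [lp.single_apply, Pi.single_apply, sub_eq_zero]) k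

section ImpulseResponse

variable [AddCommGroup α] [DecidableEq α] [Fintype ι] [DecidableEq ι] [Fintype κ]

noncomputable def impulseResponse
    (T : lp (fun _ : α => EuclideanSpace ℝ ι) 2 →L[ℝ] lp (fun _ : α => EuclideanSpace ℝ κ) 2) :
    α → Matrix κ ι ℝ :=
  fun k => Matrix.of fun i n => T (lp.single 2 0 (EuclideanSpace.single n 1)) k i

variable (T : lp (fun _ : α => EuclideanSpace ℝ ι) 2 →L[ℝ] lp (fun _ : α => EuclideanSpace ℝ κ) 2)

theorem memℓp_impulseResponse (i : κ) (n : ι) : Memℓp (fun k => impulseResponse T k i n) 2 :=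
  (lp.memℓp _).piLp_apply i

theorem apply_single_zero_eq_sum_impulseResponse (v : EuclideanSpace ℝ ι) (k : α) (i : κ) :
    T (lp.single 2 0 v) k i = ∑ n, v n * impulseResponse T k i n := by
  let L := EuclideanSpace.proj i ∘L lp.evalCLM ℝ _ 2 k ∘L T ∘L
    lp.singleContinuousLinearMap ℝ (fun _ : α => EuclideanSpace ℝ ι) 2 0
  calc T (lp.single 2 0 v) k i = L v := rfl
    _ = ∑ n, v n * L (EuclideanSpace.single n 1) := by
        conv_lhs => rw [← (EuclideanSpace.basisFun ι ℝ).sum_repr v]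
        simp only [map_sum, map_smul, EuclideanSpace.basisFun_repr,
          EuclideanSpace.basisFun_apply, smul_eq_mul]
    _ = ∑ n, v n * impulseResponse T k i n := rfl

theorem hasSum_impulseResponse_convolution (hT : IsShiftInvariant T)
    (x : lp (fun _ : α => EuclideanSpace ℝ ι) 2) (k : α) (i : κ) :
    HasSum (fun m => ∑ n, impulseResponse T m i n * x (k - m) n) (T x k i) := by
  have hx : HasSum (fun m => T (lp.single 2 m (x m)) k i) (T x k i) :=
    (lp.hasSum_single ENNReal.ofNat_ne_top x).mapL
      (EuclideanSpace.proj i ∘L lp.evalCLM ℝ (fun _ : α => EuclideanSpace ℝ κ) 2 k ∘L T)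
  have hterm (m : α) :
      T (lp.single 2 m (x m)) k i = ∑ n, impulseResponse T (k - m) i n * x m n := by
    rw [hT.apply_single, apply_single_zero_eq_sum_impulseResponse]
    simp only [mul_comm]
  rw [← (Equiv.subLeft k).hasSum_iff]
  simpa only [Function.comp_def, Equiv.subLeft_apply, sub_sub_cancel, hterm] using hx

theorem eq_impulseResponse_of_apply_eq_tsum {H : α → Matrix κ ι ℝ}
    (hH : ∀ (x : lp (fun _ : α => EuclideanSpace ℝ ι) 2) k i,
      T x k i = ∑' m, ∑ n, H m i n * x (k - m) n) :
    H = impulseResponse T := by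
  ext k i n
  rw [impulseResponse, Matrix.of_apply, hH, tsum_eq_single k]
  · simp [PiLp.single_apply]
  · intro m hm
    simp [lp.single_apply, sub_eq_zero, Ne.symm hm]

end ImpulseResponse

theorem kernel_theorem_multichannel_general
    (d N M : ℕ)
    (T : lp (fun _ : Fin d → ℤ => EuclideanSpace ℝ (Fin N)) 2 →L[ℝ]
         lp (fun _ : Fin d → ℤ => EuclideanSpace ℝ (Fin M)) 2)
    (hshift : ∀ (x y : lp (fun _ : Fin d → ℤ => EuclideanSpace ℝ (Fin N)) 2)
      (k₀ : Fin d → ℤ), (∀ k : Fin d → ℤ, y k = x (k - k₀)) →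
      ∀ k : Fin d → ℤ, T y k = T x (k - k₀)) :
    (∃! H : (Fin d → ℤ) → Matrix (Fin M) (Fin N) ℝ,
      (∀ (i : Fin M) (n : Fin N), Memℓp (fun k : Fin d → ℤ => H k i n) 2) ∧
      (∀ (x : lp (fun _ : Fin d → ℤ => EuclideanSpace ℝ (Fin N)) 2)
         (k : Fin d → ℤ) (i : Fin M),
        Summable (fun m : Fin d → ℤ => |∑ n : Fin N, H m i n * x (k - m) n|) ∧
        T x k i = ∑' m : Fin d → ℤ, ∑ n : Fin N, H m i n * x (k - m) n)) ∧
    (∀ H : (Fin d → ℤ) → Matrix (Fin M) (Fin N) ℝ,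
      ((∀ (i : Fin M) (n : Fin N), Memℓp (fun k : Fin d → ℤ => H k i n) 2) ∧
       (∀ (x : lp (fun _ : Fin d → ℤ => EuclideanSpace ℝ (Fin N)) 2)
          (k : Fin d → ℤ) (i : Fin M),
         Summable (fun m : Fin d → ℤ => |∑ n : Fin N, H m i n * x (k - m) n|) ∧
         T x k i = ∑' m : Fin d → ℤ, ∑ n : Fin N, H m i n * x (k - m) n)) →
      ∀ (k : Fin d → ℤ) (i : Fin M) (n : Fin N),
        H k i n =
          T (lp.single 2 (0 : Fin d → ℤ) (EuclideanSpace.single n (1 : ℝ))) k i) := by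
  have hmem := memℓp_impulseResponse T
  refine ⟨⟨impulseResponse T, ⟨hmem, fun x k i => ⟨summable_abs_convolution hmem x k i,
      (hasSum_impulseResponse_convolution T hshift x k i).tsum_eq.symm⟩⟩, fun H hH => ?_⟩,
    fun H hH k i n => ?_⟩
  · exact eq_impulseResponse_of_apply_eq_tsum T fun x k i => (hH.2 x k i).2
  · rw [eq_impulseResponse_of_apply_eq_tsum T fun x k i => (hH.2 x k i).2]
    rfl

/-- kernel theorem for LSI operators `ℓ₂^N(ℤ^d) → ℓ₂^M(ℤ^d)`.
Let `T` be a bounded linear shift-invariant operator from `ℓ₂^N(ℤ^d)` to `ℓ₂^M(ℤ^d)`.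
Then there exists one and only one matrix-valued sequence `H : ℤ^d → ℝ^{M×N}` with
square-summable entries such that `T{x}[k] = ∑_m H[m] x[k−m]` (absolutely convergent)
for all `x` and `k`; moreover the `n`-th column of `H` equals `T{eₙ δ}`. -/
theorem kernel_theorem_multichannel
    (d N M : ℕ) (hd : 0 < d) (hN : 0 < N) (hM : 0 < M)
    (T : lp (fun _ : Fin d → ℤ => EuclideanSpace ℝ (Fin N)) 2 →L[ℝ]
         lp (fun _ : Fin d → ℤ => EuclideanSpace ℝ (Fin M)) 2)
    (hshift : ∀ (x y : lp (fun _ : Fin d → ℤ => EuclideanSpace ℝ (Fin N)) 2)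
      (k₀ : Fin d → ℤ), (∀ k : Fin d → ℤ, y k = x (k - k₀)) →
      ∀ k : Fin d → ℤ, T y k = T x (k - k₀)) :
    (∃! H : (Fin d → ℤ) → Matrix (Fin M) (Fin N) ℝ,
      (∀ (i : Fin M) (n : Fin N), Memℓp (fun k : Fin d → ℤ => H k i n) 2) ∧
      (∀ (x : lp (fun _ : Fin d → ℤ => EuclideanSpace ℝ (Fin N)) 2)
         (k : Fin d → ℤ) (i : Fin M),
        Summable (fun m : Fin d → ℤ => |∑ n : Fin N, H m i n * x (k - m) n|) ∧
        T x k i = ∑' m : Fin d → ℤ, ∑ n : Fin N, H m i n * x (k - m) n)) ∧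
    (∀ H : (Fin d → ℤ) → Matrix (Fin M) (Fin N) ℝ,
      ((∀ (i : Fin M) (n : Fin N), Memℓp (fun k : Fin d → ℤ => H k i n) 2) ∧
       (∀ (x : lp (fun _ : Fin d → ℤ => EuclideanSpace ℝ (Fin N)) 2)
          (k : Fin d → ℤ) (i : Fin M),
         Summable (fun m : Fin d → ℤ => |∑ n : Fin N, H m i n * x (k - m) n|) ∧
         T x k i = ∑' m : Fin d → ℤ, ∑ n : Fin N, H m i n * x (k - m) n)) →
      ∀ (k : Fin d → ℤ) (i : Fin M) (n : Fin N),
        H k i n =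
          T (lp.single 2 (0 : Fin d → ℤ) (EuclideanSpace.single n (1 : ℝ))) k i) :=
  kernel_theorem_multichannel_general d N M T hshift
end

section
/- Let d, N be positive integers, let U = [u₁ ⋯ u_N] and V = [v₁ ⋯ v_N] be orthogonal matrices in ℝ^{N×N} with columns u_n, v_n, and let k₁, …, k_N ∈ ℤ^d (not necessarily distinct). Define the matrix-valued filter H : ℤ^d → ℝ^{N×N} by H[·] = ∑_{n=1}^{N} u_n v_nᵀ δ[·−k_n]. Then (H^{T∨} ∗ H)[k] = I_N δ[k] for all k ∈ ℤ^d, and consequently the convolution operator T_H : ℓ₂^N(ℤ^d) → ℓ₂^N(ℤ^d), x ↦ H ∗ x, is an isometry (a Parseval N-to-N filter). -/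
/-!
Write `H[m] = U Δ[m] Vᵀ` with `Δ[m] = diag(δ[m - kₙ])ₙ` (`deltaDiag`). Since `UᵀU = I`,
`H[m]ᵀ H[m+k] = V Δ[m] Δ[m+k] Vᵀ`, which vanishes unless `k = 0`, and `∑ₘ Δ[m] = I` gives
`∑ₘ H[m]ᵀ H[m] = VVᵀ = I`. Likewise `H ∗ x = U S(Vᵀx)`, where `S` delays channel `n` by `kₙ`
(`channelShift`): the two orthogonal matrices preserve `‖x[k]‖` pointwise and `S` preserves the
`ℓ²` energy of each channel, so `T_H` is an isometry.
-/

open Matrix WithLp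

theorem tsum_sum_ite_eq {G ι α : Type*} [DecidableEq G] [Fintype ι] [AddCommMonoid α]
    [TopologicalSpace α] [ContinuousAdd α] [T2Space α] (κ : ι → G) (f : ι → G → α) :
    ∑' m, ∑ p, (if m = κ p then f p m else 0) = ∑ p, f p (κ p) := by
  rw [Summable.tsum_finsetSum fun p _ => summable_of_ne_finset_zero (s := {κ p}) fun m hm => ?_]
  · exact Finset.sum_congr rfl fun p _ => tsum_ite_eq (κ p) (f p)
  · simp_all

section DeltaDiag

variable {G ι R : Type*} [DecidableEq G] [DecidableEq ι] [CommSemiring R]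

def deltaDiag (κ : ι → G) (m : G) : Matrix ι ι R := diagonal fun p => if m = κ p then 1 else 0

variable (κ : ι → G)

theorem deltaDiag_transpose (m : G) : (deltaDiag κ m : Matrix ι ι R)ᵀ = deltaDiag κ m :=
  diagonal_transpose _

variable [Fintype ι]

theorem deltaDiag_mul_deltaDiag_add [AddGroup G] (m k : G) :
    (deltaDiag κ m * deltaDiag κ (m + k) : Matrix ι ι R) = if k = 0 then deltaDiag κ m else 0 := by
  rw [deltaDiag, deltaDiag, diagonal_mul_diagonal, ← diagonal_zero, ← apply_ite diagonal]
  congr 1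
  ext p
  by_cases hp : m = κ p <;> by_cases hk : k = 0 <;> simp [hp, hk]

theorem mul_deltaDiag_mul_apply (A B : Matrix ι ι R) (m : G) (i j : ι) :
    (A * deltaDiag κ m * B : Matrix ι ι R) i j = ∑ p, if m = κ p then A i p * B p j else 0 := by
  simp [deltaDiag, mul_apply (M := _ * _), mul_diagonal]

theorem mul_deltaDiag_mul_mulVec_apply (A B : Matrix ι ι R) (m : G) (v : ι → R) (i : ι) :
    ((A * deltaDiag κ m * B : Matrix ι ι R) *ᵥ v) i =
      ∑ p, if m = κ p then A i p * (B *ᵥ v) p else 0 := by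
  rw [← mulVec_mulVec, ← mulVec_mulVec, mulVec, dotProduct]
  simp [deltaDiag, mulVec_diagonal]

theorem transpose_mul_add_eq_ite_of_eq_mul_deltaDiag_mul [AddGroup G] {U V : Matrix ι ι R}
    (hU : Uᵀ * U = 1) {H : G → Matrix ι ι R} (hH : ∀ m, H m = U * deltaDiag κ m * Vᵀ) (m k : G) :
    (H m)ᵀ * H (m + k) = if k = 0 then V * deltaDiag κ m * Vᵀ else 0 := by
  calc (H m)ᵀ * H (m + k) = V * (deltaDiag κ m * (Uᵀ * U) * deltaDiag κ (m + k)) * Vᵀ := by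
        simp only [hH, transpose_mul, transpose_transpose, deltaDiag_transpose, Matrix.mul_assoc]
    _ = _ := by
        rw [hU, Matrix.mul_one, deltaDiag_mul_deltaDiag_add]
        split_ifs <;> simp [Matrix.mul_assoc]

variable [TopologicalSpace R] [ContinuousAdd R] [T2Space R]

theorem tsum_mul_deltaDiag_mul_apply (A B : Matrix ι ι R) (i j : ι) :
    ∑' m, (A * deltaDiag κ m * B : Matrix ι ι R) i j = (A * B) i j := by
  simp_rw [mul_deltaDiag_mul_apply, tsum_sum_ite_eq, mul_apply]

theorem tsum_mul_deltaDiag_mul_mulVec_apply (A B : Matrix ι ι R) (v : G → ι → R) (i : ι) :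
    ∑' m, ((A * deltaDiag κ m * B : Matrix ι ι R) *ᵥ v m) i = ∑ p, A i p * (B *ᵥ v (κ p)) p := by
  simp_rw [mul_deltaDiag_mul_mulVec_apply, tsum_sum_ite_eq]

end DeltaDiag

theorem norm_toLp_mulVec_of_transpose_mul_self {n : Type*} [Fintype n] [DecidableEq n]
    {U : Matrix n n ℝ} (hU : Uᵀ * U = 1) (x : EuclideanSpace ℝ n) :
    ‖toLp 2 (U *ᵥ ofLp x)‖ = ‖x‖ := by
  rw [← sq_eq_sq₀ (norm_nonneg _) (norm_nonneg _), ← real_inner_self_eq_norm_sq,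
    ← real_inner_self_eq_norm_sq, EuclideanSpace.inner_eq_star_dotProduct,
    EuclideanSpace.inner_eq_star_dotProduct]
  simp [dotProduct_mulVec, ← mulVec_transpose, hU]

section ChannelShift

variable {G 𝕜 ι : Type*} [AddGroup G] [RCLike 𝕜] [Fintype ι]

def channelShift (κ : ι → G) (x : G → EuclideanSpace 𝕜 ι) (k : G) : EuclideanSpace 𝕜 ι :=
  toLp 2 fun p => x (k - κ p) p

theorem HasSum.norm_sq_channelShift (κ : ι → G) {x : G → EuclideanSpace 𝕜 ι} {s : ℝ}
    (hx : HasSum (fun k => ‖x k‖ ^ 2) s) : HasSum (fun k => ‖channelShift κ x k‖ ^ 2) s := by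
  simp_rw [EuclideanSpace.norm_sq_eq] at hx ⊢
  have hchannel (p : ι) : HasSum (fun k => ‖x k p‖ ^ 2) (∑' k, ‖x k p‖ ^ 2) :=
    (hx.summable.of_nonneg_of_le (fun k => by positivity) fun k =>
      Finset.single_le_sum (f := fun q => ‖x k q‖ ^ 2) (fun q _ => by positivity)
        (Finset.mem_univ p)).hasSum
  rw [hx.unique (hasSum_sum fun p _ => hchannel p)]
  refine hasSum_sum fun p _ => ?_
  exact (Equiv.subRight (κ p)).hasSum_iff.mpr (hchannel p)

end ChannelShift

theorem lp.hasSum_norm_sq {ι : Type*} {E : ι → Type*} [∀ i, NormedAddCommGroup (E i)]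
    (f : lp E 2) : HasSum (fun i => ‖f i‖ ^ 2) (‖f‖ ^ 2) := by
  simpa using lp.hasSum_norm (by norm_num : 0 < (2 : ENNReal).toReal) f

theorem memℓp_two_of_hasSum_norm_sq {ι : Type*} {E : ι → Type*} [∀ i, NormedAddCommGroup (E i)]
    {f : ∀ i, E i} {s : ℝ} (hf : HasSum (fun i => ‖f i‖ ^ 2) s) : Memℓp f 2 :=
  memℓp_gen (by simpa using hf.summable)

theorem lp.norm_eq_of_hasSum_norm_sq {ι : Type*} {E F : ι → Type*} [∀ i, NormedAddCommGroup (E i)]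
    [∀ i, NormedAddCommGroup (F i)] (f : lp E 2) (g : lp F 2)
    (h : HasSum (fun i => ‖f i‖ ^ 2) (‖g‖ ^ 2)) : ‖f‖ = ‖g‖ :=
  (sq_eq_sq₀ (norm_nonneg _) (norm_nonneg _)).mp ((lp.hasSum_norm_sq f).unique h)

theorem parseval_N_to_N_module_general
    (d N : ℕ)
    (U V : Matrix (Fin N) (Fin N) ℝ)
    (hU : Uᵀ * U = 1) (hV : Vᵀ * V = 1)
    (κ : Fin N → (Fin d → ℤ))
    (H : (Fin d → ℤ) → Matrix (Fin N) (Fin N) ℝ)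
    (hH : ∀ (k : Fin d → ℤ) (i j : Fin N),
      H k i j = ∑ n : Fin N, if k = κ n then U i n * V j n else 0) :
    (∀ (k : Fin d → ℤ) (n n' : Fin N),
      ∑' m : Fin d → ℤ, ((H m)ᵀ * H (m + k)) n n' =
        if k = 0 then (1 : Matrix (Fin N) (Fin N) ℝ) n n' else 0) ∧
    (∀ x : lp (fun _ : Fin d → ℤ => EuclideanSpace ℝ (Fin N)) 2,
      ∃ u : lp (fun _ : Fin d → ℤ => EuclideanSpace ℝ (Fin N)) 2,
        (∀ (k : Fin d → ℤ) (i : Fin N),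
          u k i = ∑' m : Fin d → ℤ, ∑ n : Fin N, H m i n * x (k - m) n) ∧
        ‖u‖ = ‖x‖) := by
  have hfactor (m : Fin d → ℤ) : H m = U * deltaDiag κ m * Vᵀ := by
    ext i j
    rw [hH, mul_deltaDiag_mul_apply]
    rfl
  have hVVt : V * Vᵀ = 1 := mul_eq_one_comm.mp hV
  refine ⟨fun k n n' => ?_, fun x => ?_⟩
  · simp_rw [transpose_mul_add_eq_ite_of_eq_mul_deltaDiag_mul κ hU hfactor]
    split_ifs
    · rw [tsum_mul_deltaDiag_mul_apply, hVVt]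
    · simp
  · let y k := toLp 2 (Vᵀ *ᵥ ofLp (x k))
    let u k := toLp 2 (U *ᵥ ofLp (channelShift κ y k))
    have hu : HasSum (fun k => ‖u k‖ ^ 2) (‖x‖ ^ 2) := by
      simp only [u, norm_toLp_mulVec_of_transpose_mul_self hU]
      refine HasSum.norm_sq_channelShift κ ?_
      simpa only [y, norm_toLp_mulVec_of_transpose_mul_self
        (by rwa [transpose_transpose] : Vᵀᵀ * Vᵀ = 1)] using lp.hasSum_norm_sq x
    refine ⟨⟨u, memℓp_two_of_hasSum_norm_sq hu⟩, fun k i => ?_,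
      lp.norm_eq_of_hasSum_norm_sq _ x hu⟩
    change _ = ∑' m, (H m *ᵥ ofLp (x (k - m))) i
    simp_rw [hfactor, tsum_mul_deltaDiag_mul_mulVec_apply]
    rfl

/-- Let `U = [u₁ ⋯ u_N]` and `V = [v₁ ⋯ v_N]` be orthogonal matrices in
`ℝ^{N×N}` and `k₁, …, k_N ∈ ℤ^d` (not necessarily distinct). Define
`H[·] = ∑_n u_n v_nᵀ δ[·−k_n]`. Then `(H^{T∨} ∗ H)[k] = I_N δ[k]` for all `k`, and
consequently `T_H : ℓ₂^N(ℤ^d) → ℓ₂^N(ℤ^d)`, `x ↦ H ∗ x`, is an isometry (a Parseval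
N-to-N filter). -/
theorem parseval_N_to_N_module
    (d N : ℕ) (hd : 0 < d) (hN : 0 < N)
    (U V : Matrix (Fin N) (Fin N) ℝ)
    (hU : Uᵀ * U = 1) (hV : Vᵀ * V = 1)
    (κ : Fin N → (Fin d → ℤ))
    (H : (Fin d → ℤ) → Matrix (Fin N) (Fin N) ℝ)
    (hH : ∀ (k : Fin d → ℤ) (i j : Fin N),
      H k i j = ∑ n : Fin N, if k = κ n then U i n * V j n else 0) :
    (∀ (k : Fin d → ℤ) (n n' : Fin N),
      ∑' m : Fin d → ℤ, ((H m)ᵀ * H (m + k)) n n' =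
        if k = 0 then (1 : Matrix (Fin N) (Fin N) ℝ) n n' else 0) ∧
    (∀ x : lp (fun _ : Fin d → ℤ => EuclideanSpace ℝ (Fin N)) 2,
      ∃ u : lp (fun _ : Fin d → ℤ => EuclideanSpace ℝ (Fin N)) 2,
        (∀ (k : Fin d → ℤ) (i : Fin N),
          u k i = ∑' m : Fin d → ℤ, ∑ n : Fin N, H m i n * x (k - m) n) ∧
        ‖u‖ = ‖x‖) :=
  parseval_N_to_N_module_general d N U V hU hV κ H hH
end
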